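/- Consider the two-player continuous NEP over Y = {(x^1,x^2) ∈ ℝ² : 0 ≤ x^1 ≤ 2, 0 ≤ x^2 ≤ 2} where player 1 minimizes θ_1(x^1,x^2) = (7/16)(x^1)² − x^1 x^2 + (1/2)x^1 in x^1 and player 2 minimizes θ_2(x^1,x^2) = (1/2)(x^2)² − (3/4)x^1 x^2 in x^2. Then (0,0) is the unique Nash equilibrium of this continuous game restricted to Y, yet (0,0) is not an equilibrium of the discrete game on [−1,2]² ∩ ℤ², while (1,1) and (2,2) ∈ Y are equilibria of the discrete game on [−1,2]² ∩ ℤ². -/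
import Mathlib


noncomputable def trapθ1 (a b : ℝ) : ℝ :=
  (7 / 16) * a ^ 2 - a * b + (1 / 2) * a

noncomputable def trapθ2 (a b : ℝ) : ℝ :=
  (1 / 2) * b ^ 2 - (3 / 4) * a * b

/-- Equilibrium of the continuous NEP restricted to `Y = [0,2]²`. -/
def IsContEqY (a b : ℝ) : Prop :=
  0 ≤ a ∧ a ≤ 2 ∧ 0 ≤ b ∧ b ≤ 2 ∧
    (∀ y : ℝ, 0 ≤ y → y ≤ 2 → trapθ1 a b ≤ trapθ1 y b) ∧
    (∀ y : ℝ, 0 ≤ y → y ≤ 2 → trapθ2 a b ≤ trapθ2 a y)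

/-- Equilibrium of the discrete NEP on `[-1,2]² ∩ ℤ²`. -/
def IsDiscEqX (a b : ℤ) : Prop :=
  -1 ≤ a ∧ a ≤ 2 ∧ -1 ≤ b ∧ b ≤ 2 ∧
    (∀ y : ℤ, -1 ≤ y → y ≤ 2 → trapθ1 (a : ℝ) (b : ℝ) ≤ trapθ1 (y : ℝ) (b : ℝ)) ∧
    (∀ y : ℤ, -1 ≤ y → y ≤ 2 → trapθ2 (a : ℝ) (b : ℝ) ≤ trapθ2 (a : ℝ) (y : ℝ))

/-- `(0,0)` is the unique equilibrium of the continuous game on `Y = [0,2]²`,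
it is not a discrete equilibrium on `[-1,2]² ∩ ℤ²`, while `(1,1)` and `(2,2)`
(which lie in `Y`) are discrete equilibria. -/
theorem stmt6 :
    (∀ a b : ℝ, IsContEqY a b ↔ (a = 0 ∧ b = 0)) ∧
    ¬ IsDiscEqX 0 0 ∧ IsDiscEqX 1 1 ∧ IsDiscEqX 2 2 := by

  refine ⟨?_, ?_, ?_, ?_⟩
  · intro a b
    constructor
    · rintro ⟨ha0, ha2, hb0, hb2, h1, h2⟩
      have hb := h2 ((3/4)*a) (by linarith) (by linarith)
      simp only [trapθ2] at hb
      have hba : b = (3/4)*a := by nlinarith [sq_nonneg (b - (3/4)*a)]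
      have ha : a = 0 := by
        by_contra h
        have hpos : 0 < a := lt_of_le_of_ne ha0 (Ne.symm h)
        have h10 := h1 0 le_rfl (by norm_num)
        simp only [trapθ1] at h10
        have h85 : 8/5 ≤ a := by nlinarith
        have hy := h1 ((6*a-4)/7) (by linarith) (by linarith)
        simp only [trapθ1] at hy
        nlinarith [sq_nonneg (a+4)]
      exact ⟨ha, by rw [hba, ha]; ring⟩
    · rintro ⟨ha, hb⟩
      subst ha; subst hb
      refine ⟨le_rfl, by norm_num, le_rfl, by norm_num, ?_, ?_⟩
      · intro y hy0 hy2; simp only [trapθ1]; nlinarith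
      · intro y hy0 hy2; simp only [trapθ2]; nlinarith
  · rintro ⟨-, -, -, -, h1, -⟩
    have := h1 (-1) (by norm_num) (by norm_num)
    simp only [trapθ1] at this
    norm_num at this
  · refine ⟨by norm_num, by norm_num, by norm_num, by norm_num, ?_, ?_⟩
    · intro y hy0 hy2
      interval_cases y <;> simp only [trapθ1] <;> norm_num
    · intro y hy0 hy2
      interval_cases y <;> simp only [trapθ2] <;> norm_num
  · refine ⟨by norm_num, by norm_num, by norm_num, by norm_num, ?_, ?_⟩
    · intro y hy0 hy2
      interval_cases y <;> simp only [trapθ1] <;> norm_num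
    · intro y hy0 hy2
      interval_cases y <;> simp only [trapθ2] <;> norm_num
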